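/- arXiv:0904.4727 — 2 statements merged into one kernel-verified Lean document; each statement's English description precedes it below -/
import Mathlib

section
/- A c-atom A is monotone if and only if for every element W⊎V of its abstract representation A_c*, W ∪ V = A_d (equivalently, |W| + |V| = |A_d| since W and V are disjoint). -/
variable {α : Type*} [DecidableEq α]

/-- `S` is covered by the prefixed power set `W ⊎ V`. -/
def covers (W V S : Finset α) : Prop := W ⊆ S ∧ S ⊆ W ∪ V

/-- `I ⊎ J` is included in `W ⊎ V`. -/
def included (I J W V : Finset α) : Prop := ∀ S : Finset α, covers I J S → covers W V S

/-- `W ⊎ V` is a prefixed power set of the c-atom `(Ad, Ac)` all of whose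
covered sets are admissible solutions. -/
def goodPPS (Ad : Finset α) (Ac : Set (Finset α)) (W V : Finset α) : Prop :=
  W ∈ Ac ∧ V ⊆ Ad \ W ∧ ∀ T : Finset α, W ⊆ T → T ⊆ W ∪ V → T ∈ Ac

/-- `W ⊎ V` is `W`-maximal in the c-atom `(Ad, Ac)`. -/
def maximalPPS (Ad : Finset α) (Ac : Set (Finset α)) (W V : Finset α) : Prop :=
  goodPPS Ad Ac W V ∧ ∀ V' : Finset α, V ⊂ V' → V' ⊆ Ad \ W → ¬ goodPPS Ad Ac W V'

/-- The abstract representation `A_c*` of the c-atom `(Ad, Ac)`: all maximal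
prefixed power sets, with redundant ones (those included in a distinct maximal
prefixed power set) removed. -/
def absRep (Ad : Finset α) (Ac : Set (Finset α)) : Set (Finset α × Finset α) :=
  {p | maximalPPS Ad Ac p.1 p.2 ∧
    ∀ q : Finset α × Finset α, maximalPPS Ad Ac q.1 q.2 → q ≠ p →
      ¬ included p.1 p.2 q.1 q.2}

/-- The c-atom `(Ad, Ac)` is monotone. -/
def monotoneCatom (Ad : Finset α) (Ac : Set (Finset α)) : Prop :=
  ∀ S ∈ Ac, ∀ S' : Finset α, S ⊆ S' → S' ⊆ Ad → S' ∈ Ac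

/-!
In a monotone c-atom every `W ⊎ (A_d \ W)` with `W ∈ A_c` is good, so a maximal prefixed power
set `W ⊎ V` has `V = A_d \ W`. Conversely, given `S ∈ A_c`, pick among the finitely many good
prefixed power sets covering `S` one whose family of covered sets is maximal. Any good prefixed
power set including it still covers `S`, so it is maximal among all good ones and thus lies in
`A_c*`. If it spans `A_d`, it covers every `S'` with `S ⊆ S' ⊆ A_d`.
-/

section CAtom

variable {Ad : Finset α} {Ac : Set (Finset α)} {I J W V : Finset α}

theorem included.fst_subset (h : included I J W V) : W ⊆ I :=
  (h I ⟨subset_rfl, Finset.subset_union_left⟩).1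

theorem included.union_subset (h : included I J W V) : I ∪ J ⊆ W ∪ V :=
  (h (I ∪ J) ⟨Finset.subset_union_left, subset_rfl⟩).2

theorem eq_of_included_of_included (hIJ : Disjoint I J) (hWV : Disjoint W V)
    (h₁ : included I J W V) (h₂ : included W V I J) : I = W ∧ J = V := by
  have hI : I = W := h₂.fst_subset.antisymm h₁.fst_subset
  have hunion : I ∪ J = W ∪ V := h₁.union_subset.antisymm h₂.union_subset
  refine ⟨hI, ?_⟩
  rw [← Finset.union_sdiff_cancel_left hIJ, ← Finset.union_sdiff_cancel_left hWV, hunion, hI]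

theorem goodPPS.disjoint (h : goodPPS Ad Ac W V) : Disjoint W V :=
  Finset.disjoint_left.mpr fun _ hxW hxV => (Finset.mem_sdiff.mp (h.2.1 hxV)).2 hxW

theorem goodPPS_self (hW : W ∈ Ac) : goodPPS Ad Ac W ∅ :=
  ⟨hW, Finset.empty_subset _, fun T hWT hTW => by
    rwa [(Finset.union_empty W ▸ hTW : T ⊆ W).antisymm hWT]⟩

theorem goodPPS_sdiff_of_monotoneCatom (hmono : monotoneCatom Ad Ac) (hW : W ∈ Ac)
    (hWAd : W ⊆ Ad) : goodPPS Ad Ac W (Ad \ W) :=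
  ⟨hW, subset_rfl, fun T hWT hTAd =>
    hmono W hW T hWT (Finset.union_sdiff_of_subset hWAd ▸ hTAd)⟩

theorem maximalPPS.snd_eq_sdiff_of_monotoneCatom (h : maximalPPS Ad Ac W V)
    (hmono : monotoneCatom Ad Ac) (hWAd : W ⊆ Ad) : V = Ad \ W := by
  by_contra hne
  exact h.2 (Ad \ W) (h.1.2.1.ssubset_of_ne hne) subset_rfl
    (goodPPS_sdiff_of_monotoneCatom hmono h.1.1 hWAd)

theorem mem_absRep_of_forall_included (h : goodPPS Ad Ac W V)
    (hmax : ∀ q : Finset α × Finset α, goodPPS Ad Ac q.1 q.2 → included W V q.1 q.2 →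
      q = (W, V)) :
    (W, V) ∈ absRep Ad Ac := by
  refine ⟨⟨h, fun V' hVV' _ hgood => ?_⟩, fun q hq hne hincl => hne (hmax q hq.1 hincl)⟩
  have hincl : included W V W V' := fun T hT =>
    ⟨hT.1, hT.2.trans (Finset.union_subset_union_right hVV'.subset)⟩
  exact hVV'.ne (congrArg Prod.snd (hmax (W, V') hgood hincl)).symm

theorem exists_mem_absRep_included (hAc : ∀ S ∈ Ac, S ⊆ Ad) {S : Finset α} (hS : S ∈ Ac) :
    ∃ p ∈ absRep Ad Ac, included S ∅ p.1 p.2 := by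
  set G : Set (Finset α × Finset α) := {q | goodPPS Ad Ac q.1 q.2 ∧ included S ∅ q.1 q.2}
  have hGfin : G.Finite := (Ad.powerset ×ˢ Ad.powerset).finite_toSet.subset
    fun q hq => Finset.mem_product.mpr
      ⟨Finset.mem_powerset.mpr (hAc _ hq.1.1),
        Finset.mem_powerset.mpr (hq.1.2.1.trans Finset.sdiff_subset)⟩
  have hGne : G.Nonempty := ⟨(S, ∅), goodPPS_self hS, fun _ hT => hT⟩
  obtain ⟨⟨W, V⟩, ⟨hgood, hSincl⟩, hmax⟩ :=
    hGfin.exists_maximalFor (fun q => {T | covers q.1 q.2 T}) G hGne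
  refine ⟨(W, V), mem_absRep_of_forall_included hgood fun q hq hincl => ?_, hSincl⟩
  have hqG : q ∈ G := ⟨hq, fun T hT => hincl T (hSincl T hT)⟩
  obtain ⟨hW, hV⟩ :=
    eq_of_included_of_included hgood.disjoint hq.disjoint hincl (hmax hqG hincl)
  exact Prod.ext hW.symm hV.symm

end CAtom

theorem stmt_5 (Ad : Finset α) (Ac : Set (Finset α)) (hAc : ∀ S ∈ Ac, S ⊆ Ad) :
    monotoneCatom Ad Ac ↔ ∀ p ∈ absRep Ad Ac, p.1 ∪ p.2 = Ad := by
  constructor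
  · rintro hmono ⟨W, V⟩ ⟨hmax : maximalPPS Ad Ac W V, -⟩
    have hWAd : W ⊆ Ad := hAc W hmax.1.1
    change W ∪ V = Ad
    rw [hmax.snd_eq_sdiff_of_monotoneCatom hmono hWAd, Finset.union_sdiff_of_subset hWAd]
  · intro habs S hS S' hSS' hS'Ad
    obtain ⟨⟨W, V⟩, hp, hincl⟩ := exists_mem_absRep_included hAc hS
    have hunion : W ∪ V = Ad := habs _ hp
    exact hp.1.1.2.2 S' (hincl.fst_subset.trans hSS') (hunion ▸ hS'Ad)
end

section
/- Let A be a c-atom and R, I interpretations with R ⊆ I, and let T_A^I = I ∩ A_d. Then R conditionally satisfies A w.r.t. I (i.e., R ∩ A_d ∈ A_c and for every S' with R ∩ A_d ⊆ S' ⊆ T_A^I we have S' ∈ A_c) if and only if A_c* contains an abstract prefixed power set W⊎V such that (R ∩ A_d)⊎(T_A^I \ (R ∩ A_d)) is included in W⊎V. -/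
variable {α : Type*} [DecidableEq α]

/-! Every good prefixed power set extends to a maximal one, and every maximal one is included in
a member of `A_c*`: a redundant member is included in a maximal one with a strictly smaller
prefix, so this descent terminates. Conditional satisfaction says precisely that
`(R ∩ A_d) ⊎ (T \ (R ∩ A_d))` is good, and a prefixed power set included in a good one is good. -/

section

variable {Ad : Finset α} {Ac : Set (Finset α)} {W V : Finset α}

theorem included_iff {I J W V : Finset α} : included I J W V ↔ W ⊆ I ∧ I ∪ J ⊆ W ∪ V := by
  refine ⟨fun h => ⟨(h I ⟨subset_rfl, Finset.subset_union_left⟩).1,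
    (h (I ∪ J) ⟨Finset.subset_union_left, subset_rfl⟩).2⟩, ?_⟩
  rintro ⟨hW, hWV⟩ S ⟨hIS, hSIJ⟩
  exact ⟨hW.trans hIS, hSIJ.trans hWV⟩

theorem included_refl (W V : Finset α) : included W V W V := fun _ h => h

theorem included.trans {I J W V W' V' : Finset α} (h : included I J W V)
    (h' : included W V W' V') : included I J W' V' :=
  fun S hS => h' S (h S hS)

theorem goodPPS.of_included {W' V' : Finset α} (h : goodPPS Ad Ac W' V') (hV : V ⊆ Ad \ W)
    (hinc : included W V W' V') : goodPPS Ad Ac W V := by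
  have hcov : ∀ T, W ⊆ T → T ⊆ W ∪ V → T ∈ Ac := fun T hWT hTWV =>
    have hT := hinc T ⟨hWT, hTWV⟩
    h.2.2 T hT.1 hT.2
  exact ⟨hcov W subset_rfl Finset.subset_union_left, hV, hcov⟩

theorem maximalPPS_iff_maximal : maximalPPS Ad Ac W V ↔ Maximal (goodPPS Ad Ac W) V := by
  refine ⟨fun ⟨hV, hmax⟩ => ⟨hV, fun V' hV' hVV' => ?_⟩,
    fun h => ⟨h.1, fun V' hVV' _ hV' => h.not_gt hV' hVV'⟩⟩
  by_contra hV'V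
  exact hmax V' (lt_of_le_not_ge hVV' hV'V) hV'.2.1 hV'

theorem goodPPS.exists_maximalPPS_superset (h : goodPPS Ad Ac W V) :
    ∃ V', V ⊆ V' ∧ maximalPPS Ad Ac W V' := by
  have hfin : {V' | goodPPS Ad Ac W V'}.Finite :=
    (Ad \ W).powerset.finite_toSet.subset fun V' hV' => Finset.mem_powerset.2 hV'.2.1
  obtain ⟨V', hVV', hmax⟩ := hfin.exists_le_maximal h
  exact ⟨V', hVV', maximalPPS_iff_maximal.2 hmax⟩

theorem maximalPPS.ssubset_of_included {W' V' : Finset α} (h : maximalPPS Ad Ac W V)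
    (h' : maximalPPS Ad Ac W' V') (hne : (W', V') ≠ (W, V)) (hinc : included W V W' V') :
    W' ⊂ W := by
  obtain ⟨hW'W, hWV⟩ := included_iff.1 hinc
  refine hW'W.ssubset_of_ne fun hW' => hne ?_
  subst hW'
  have hVV' : V ⊆ V' := fun x hx => by
    have hxW : x ∉ W' := (Finset.mem_sdiff.1 (h.1.2.1 hx)).2
    simpa [hxW] using hWV (Finset.mem_union_right _ hx)
  rw [(maximalPPS_iff_maximal.1 h).eq_of_le h'.1 hVV']

theorem maximalPPS.exists_mem_absRep_included (h : maximalPPS Ad Ac W V) :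
    ∃ q ∈ absRep Ad Ac, included W V q.1 q.2 := by
  induction W using Finset.strongInduction generalizing V with
  | H W ih =>
    by_cases hW : (W, V) ∈ absRep Ad Ac
    · exact ⟨_, hW, included_refl W V⟩
    obtain ⟨q, hq, hne, hinc⟩ : ∃ q : Finset α × Finset α, maximalPPS Ad Ac q.1 q.2 ∧
        q ≠ (W, V) ∧ included W V q.1 q.2 := by
      simpa [absRep, h] using hW
    obtain ⟨r, hr, hqr⟩ := ih q.1 (h.ssubset_of_included hq hne hinc) hq
    exact ⟨r, hr, hinc.trans hqr⟩

theorem goodPPS_iff_exists_mem_absRep_included (hV : V ⊆ Ad \ W) :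
    goodPPS Ad Ac W V ↔ ∃ q ∈ absRep Ad Ac, included W V q.1 q.2 := by
  refine ⟨fun h => ?_, fun ⟨q, hq, hinc⟩ => hq.1.1.of_included hV hinc⟩
  obtain ⟨V', hVV', hV'⟩ := h.exists_maximalPPS_superset
  obtain ⟨q, hq, hinc⟩ := hV'.exists_mem_absRep_included
  refine ⟨q, hq, (included_iff.2 ⟨subset_rfl, ?_⟩).trans hinc⟩
  exact Finset.union_subset_union subset_rfl hVV'

end

theorem stmt_12_general (Ad : Finset α) (Ac : Set (Finset α))
    (R I : Finset α) (hRI : R ⊆ I) :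
    (R ∩ Ad ∈ Ac ∧ ∀ S' : Finset α, R ∩ Ad ⊆ S' → S' ⊆ I ∩ Ad → S' ∈ Ac) ↔
      ∃ p ∈ absRep Ad Ac,
        p.1 ⊆ R ∩ Ad ∧ (R ∩ Ad) ∪ ((I ∩ Ad) \ (R ∩ Ad)) ⊆ p.1 ∪ p.2 := by
  have hun : (R ∩ Ad) ∪ ((I ∩ Ad) \ (R ∩ Ad)) = I ∩ Ad :=
    Finset.union_sdiff_of_subset (Finset.inter_subset_inter hRI subset_rfl)
  have hV : (I ∩ Ad) \ (R ∩ Ad) ⊆ Ad \ (R ∩ Ad) :=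
    Finset.sdiff_subset_sdiff Finset.inter_subset_right subset_rfl
  simpa only [goodPPS, hV, true_and, hun, included_iff] using
    goodPPS_iff_exists_mem_absRep_included (Ac := Ac) hV

theorem stmt_12 (Ad : Finset α) (Ac : Set (Finset α)) (hAc : ∀ S ∈ Ac, S ⊆ Ad)
    (R I : Finset α) (hRI : R ⊆ I) :
    (R ∩ Ad ∈ Ac ∧ ∀ S' : Finset α, R ∩ Ad ⊆ S' → S' ⊆ I ∩ Ad → S' ∈ Ac) ↔
      ∃ p ∈ absRep Ad Ac,
        p.1 ⊆ R ∩ Ad ∧ (R ∩ Ad) ∪ ((I ∩ Ad) \ (R ∩ Ad)) ⊆ p.1 ∪ p.2 :=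
  stmt_12_general Ad Ac R I hRI
end
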